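/- The number of ordered pairs (u₁,u₂) of units of Z/nZ with u₁ + u₂ = r is (n/rad(n)) · ∏_{p|n, p|r} (p-1) · ∏_{p|n, p∤r} (p-2). -/

import Mathlib

/-!
Writing `u₂ = r - u₁`, we count the `x` with `x` and `r - x` both units. By the Chinese remainder
theorem this count is multiplicative in `n`. For `n = p ^ k`, reduction modulo `p` is a surjective
local homomorphism, so being a unit is detected modulo `p` and each residue class has `p ^ (k - 1)`
lifts; in `ZMod p` the excluded values are `0` and `r`, leaving `p - 1` or `p - 2` choices.
-/

def rad (n : ℕ) : ℕ := n.primeFactors.prod id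

open Finset

noncomputable def unitSumCount (A : Type*) [Ring A] (a : A) : ℕ :=
  Nat.card {x : A // IsUnit x ∧ IsUnit (a - x)}

section Ring

variable {A B C : Type*} [Ring A] [Ring B] [Ring C]

theorem card_units_add_eq_unitSumCount (a : A) :
    Nat.card {u : Aˣ × Aˣ // (u.1 : A) + u.2 = a} = unitSumCount A a := by
  refine Nat.card_congr
    { toFun := fun u => ⟨u.1.1, u.1.1.isUnit, eq_sub_of_add_eq' u.2 ▸ u.1.2.isUnit⟩
      invFun := fun x => ⟨(x.2.1.unit, x.2.2.unit), add_sub_cancel _ _⟩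
      left_inv := fun u => ?_
      right_inv := fun x => rfl }
  ext
  · rfl
  · simp [← u.2]

theorem unitSumCount_of_ringEquiv_prod (e : A ≃+* B × C) (a : A) :
    unitSumCount A a = unitSumCount B (e a).1 * unitSumCount C (e a).2 := by
  rw [unitSumCount, unitSumCount, unitSumCount, ← Nat.card_prod]
  refine Nat.card_congr <| (e.toEquiv.subtypeEquiv fun x => ?_).trans
    (Equiv.subtypeProdEquivProd (p := fun y => IsUnit y ∧ IsUnit ((e a).1 - y))
      (q := fun z => IsUnit z ∧ IsUnit ((e a).2 - z)))
  simp only [RingEquiv.toEquiv_eq_coe, EquivLike.coe_coe, ← isUnit_map_iff e, map_sub,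
    Prod.isUnit_iff, Prod.fst_sub, Prod.snd_sub]
  tauto

theorem AddMonoidHom.card_preimage_eq_card_ker_mul {G H : Type*} [AddGroup G] [AddGroup H]
    [Finite G] (f : G →+ H) (hf : Function.Surjective f) (P : H → Prop) :
    Nat.card {x // P (f x)} = Nat.card f.ker * Nat.card {y // P y} := by
  classical
  have := Fintype.ofFinite G
  have := Fintype.ofSurjective f hf
  have hfiber (y : {y // P y}) : Nat.card {x // f x = y} = Nat.card f.ker :=
    Nat.card_congr (f.fiberEquivKerOfSurjective hf y)
  rw [← Nat.card_congr (Equiv.sigmaSubtypeFiberEquivSubtype f fun x => Iff.rfl), Nat.card_sigma]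
  simp only [hfiber, sum_const, card_univ, smul_eq_mul, Fintype.card_eq_nat_card, mul_comm]

theorem unitSumCount_eq_card_ker_mul [Finite A] (f : A →+* B) [IsLocalHom f]
    (hf : Function.Surjective f) (a : A) :
    unitSumCount A a = Nat.card (f : A →+ B).ker * unitSumCount B (f a) := by
  rw [unitSumCount, unitSumCount, ← AddMonoidHom.card_preimage_eq_card_ker_mul _ hf]
  refine Nat.card_congr (Equiv.subtypeEquivRight fun x => ?_)
  rw [← isUnit_map_iff f x, ← isUnit_map_iff f (a - x), map_sub]
  rfl

end Ring

theorem unitSumCount_field {K : Type*} [Field K] [Finite K] [DecidableEq K] (a : K) :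
    unitSumCount K a = Nat.card K - if a = 0 then 1 else 2 := by
  have := Fintype.ofFinite K
  rw [unitSumCount, Nat.card_eq_fintype_card, Nat.card_eq_fintype_card, Fintype.card_subtype]
  have : ({x | IsUnit x ∧ IsUnit (a - x)} : Finset K) = univ \ {0, a} := by
    ext x
    simp [sub_eq_zero, eq_comm]
  rw [this, card_sdiff_of_subset (subset_univ _), card_univ]
  split_ifs with ha <;> simp [ha, eq_comm]

namespace ZMod

variable {p k : ℕ}

theorem isLocalHom_castHom_prime_pow (hp : p.Prime) (hk : k ≠ 0) :
    IsLocalHom (castHom (dvd_pow_self p hk) (ZMod p)) := by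
  have : Fact p.Prime := ⟨hp⟩
  refine ⟨fun x hx => ?_⟩
  rw [← natCast_zmod_val x, isUnit_natCast_iff_not_dvd_pow hp (Nat.pos_of_ne_zero hk),
    ← natCast_eq_zero_iff]
  rw [← natCast_zmod_val x, map_natCast] at hx
  exact hx.ne_zero

theorem card_ker_castHom_prime_pow (hp : p.Prime) (hk : k ≠ 0) :
    Nat.card (castHom (dvd_pow_self p hk) (ZMod p) : ZMod (p ^ k) →+ ZMod p).ker = p ^ (k - 1) := by
  have : NeZero p := ⟨hp.ne_zero⟩
  have : NeZero (p ^ k) := ⟨pow_ne_zero k hp.ne_zero⟩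
  have h := AddMonoidHom.card_preimage_eq_card_ker_mul
    (castHom (dvd_pow_self p hk) (ZMod p) : ZMod (p ^ k) →+ ZMod p)
    (castHom_surjective (dvd_pow_self p hk)) fun _ => True
  simp only [Nat.card_subtype_true, Nat.card_zmod] at h
  refine Nat.eq_of_mul_eq_mul_right hp.pos ?_
  rw [← h, ← pow_succ, Nat.sub_add_cancel (Nat.pos_of_ne_zero hk)]

theorem unitSumCount_prime_pow (hp : p.Prime) (hk : k ≠ 0) (R : ℕ) :
    unitSumCount (ZMod (p ^ k)) R = p ^ (k - 1) * if p ∣ R then p - 1 else p - 2 := by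
  have : Fact p.Prime := ⟨hp⟩
  have := isLocalHom_castHom_prime_pow hp hk
  rw [unitSumCount_eq_card_ker_mul _ (castHom_surjective (dvd_pow_self p hk)),
    card_ker_castHom_prime_pow hp hk, map_natCast, unitSumCount_field, Nat.card_zmod]
  simp only [natCast_eq_zero_iff]
  split_ifs <;> rfl

theorem unitSumCount_mul_of_coprime {m n : ℕ} (hmn : m.Coprime n) (R : ℕ) :
    unitSumCount (ZMod (m * n)) R = unitSumCount (ZMod m) R * unitSumCount (ZMod n) R := by
  rw [unitSumCount_of_ringEquiv_prod (chineseRemainder hmn), map_natCast]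
  rfl

theorem unitSumCount_one (R : ℕ) : unitSumCount (ZMod 1) R = 1 :=
  Nat.card_eq_one_iff_unique.mpr
    ⟨inferInstance, ⟨⟨0, isUnit_of_subsingleton _, isUnit_of_subsingleton _⟩⟩⟩

theorem unitSumCount_eq_prod {n : ℕ} (hn : n ≠ 0) (R : ℕ) :
    unitSumCount (ZMod n) R =
      ∏ p ∈ n.primeFactors, p ^ (n.factorization p - 1) * if p ∣ R then p - 1 else p - 2 := by
  rw [Nat.multiplicative_factorization (fun m => unitSumCount (ZMod m) R)
    (fun _ _ h => unitSumCount_mul_of_coprime h R) (unitSumCount_one R) hn, Finsupp.prod,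
    Nat.support_factorization]
  refine prod_congr rfl fun p hp => ?_
  exact unitSumCount_prime_pow (Nat.prime_of_mem_primeFactors hp)
    (Finsupp.mem_support_iff.mp hp) R

end ZMod

theorem div_rad_eq_prod {n : ℕ} (hn : n ≠ 0) :
    n / rad n = ∏ p ∈ n.primeFactors, p ^ (n.factorization p - 1) := by
  refine Nat.div_eq_of_eq_mul_left (prod_pos fun p hp => Nat.pos_of_mem_primeFactors hp) ?_
  rw [rad, ← prod_mul_distrib]
  nth_rw 1 [← Nat.prod_factorization_pow_eq_self hn]
  refine prod_congr rfl fun p hp => ?_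
  have hk : 1 ≤ n.factorization p := Nat.one_le_iff_ne_zero.mpr (Finsupp.mem_support_iff.mp hp)
  rw [id, ← pow_succ, Nat.sub_add_cancel hk]

theorem sum_of_two_units_count (n : ℕ) (hn : 0 < n) (r : ZMod n) :
    Nat.card {u : (ZMod n)ˣ × (ZMod n)ˣ // ((u.1 : ZMod n)) + (u.2 : ZMod n) = r} =
      (n / rad n) * (∏ p ∈ n.primeFactors.filter (fun p => (p : ℕ) ∣ r.val), (p - 1))
        * ∏ p ∈ n.primeFactors.filter (fun p => ¬ (p : ℕ) ∣ r.val), (p - 2) := by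
  have : NeZero n := ⟨hn.ne'⟩
  nth_rw 1 [card_units_add_eq_unitSumCount, ← ZMod.natCast_zmod_val r]
  rw [ZMod.unitSumCount_eq_prod hn.ne', div_rad_eq_prod hn.ne', mul_assoc, ← prod_ite,
    ← prod_mul_distrib]
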